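/- Let f, g : Z_p → Q_p be continuously differentiable functions and n ∈ Z with Δ(f − g) > n. Then the Volkenborn integrals satisfy ∫_{Z_p} f(t) dt ≡ ∫_{Z_p} g(t) dt mod p^n·Z_p. -/

import Mathlib

open scoped Classical
open Filter

/-- `l(k)`: `l(0) = 0` and `l(k) = ⌊log_p k⌋ + 1` for `k > 0`. -/
def waveletLevel (p k : ℕ) : ℕ := if k = 0 then 0 else Nat.log p k + 1

/-- `k₋`: `k` with the top digit of its `p`-adic expansion deleted. -/
def waveletPred (p k : ℕ) : ℕ := k % p ^ (waveletLevel p k - 1)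

/-- Wavelet coefficients of `f` (as a function on `ℤ_p`, here realized on the closed
unit ball of `ℚ_p`): `a_0 = f(0)`, `a_k = f(k) - f(k₋)`. -/
noncomputable def waveletCoeff (p : ℕ) [Fact p.Prime] (f : ℚ_[p] → ℚ_[p]) (k : ℕ) : ℚ_[p] :=
  if k = 0 then f 0 else f (k : ℚ_[p]) - f ((waveletPred p k : ℕ) : ℚ_[p])

/-- The extended `p`-adic valuation, with `v_p(0) = ⊤`. -/
noncomputable def valE (p : ℕ) [Fact p.Prime] (x : ℚ_[p]) : EReal :=
  if x = 0 then ⊤ else ((x.valuation : ℝ) : EReal)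

/-- `Δ(f) = inf_k (v_p(a_k) - l(k))` for the wavelet expansion `f = ∑ a_k χ_k`. -/
noncomputable def waveletDelta (p : ℕ) [Fact p.Prime] (f : ℚ_[p] → ℚ_[p]) : EReal :=
  ⨅ k : ℕ, (valE p (waveletCoeff p f k) - ((waveletLevel p k : ℝ) : EReal))

/-- The `n`-th Riemann sum defining the Volkenborn integral. -/
noncomputable def volkenbornSum (p : ℕ) [Fact p.Prime] (f : ℚ_[p] → ℚ_[p]) (n : ℕ) : ℚ_[p] :=
  ((p : ℚ_[p]) ^ n)⁻¹ * ∑ k ∈ Finset.range (p ^ n), f (k : ℚ_[p])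

/-! The Riemann sum of level `m` of `h` equals the truncated wavelet integral
`∑_{k < p^m} a_k p^{-l(k)}`: the values on `[p^m, p^{m+1})` are `h(k) = a_k + h(k mod p^m)`,
and `j ↦ j mod p^m` covers `[0, p^m)` exactly `p` times on `[0, p^{m+1})`. So each summand of
the Riemann sum of `f - g` has norm `p^{l(k) - v_p(a_k)} ≤ p^{-n}`, and by the ultrametric
inequality so does the sum and its limit `∫ f - ∫ g`. -/

theorem sum_range_mul_mod {M : Type*} [AddCommMonoid M] (F : ℕ → M) (N d : ℕ) :
    ∑ j ∈ Finset.range (d * N), F (j % N) = d • ∑ j ∈ Finset.range N, F j := by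
  induction d with
  | zero => simp
  | succ d ih =>
    rw [Nat.succ_mul, Finset.sum_range_add, ih, succ_nsmul]
    congr 1
    refine Finset.sum_congr rfl fun j hj => ?_
    rw [Nat.mul_add_mod_self_right, Nat.mod_eq_of_lt (Finset.mem_range.mp hj)]

theorem waveletLevel_le_of_lt_pow {p k m : ℕ} (hk : k < p ^ m) : waveletLevel p k ≤ m := by
  unfold waveletLevel
  split_ifs with hk0
  · exact m.zero_le
  · exact Nat.log_lt_of_lt_pow hk0 hk

theorem waveletLevel_eq_succ {p k m : ℕ} (h₁ : p ^ m ≤ k) (h₂ : k < p ^ (m + 1)) :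
    waveletLevel p k = m + 1 := by
  have hk0 : k ≠ 0 := by
    rintro rfl
    have hpm : p ^ m = 0 := by omega
    rw [pow_succ, hpm, zero_mul] at h₂
    omega
  rw [waveletLevel, if_neg hk0, Nat.log_eq_of_pow_le_of_lt_pow h₁ h₂]

section Wavelet

variable {p : ℕ} [Fact p.Prime]

theorem waveletCoeff_eq_sub_mod (h : ℚ_[p] → ℚ_[p]) {k m : ℕ} (h₁ : p ^ m ≤ k)
    (h₂ : k < p ^ (m + 1)) : waveletCoeff p h k = h k - h ((k % p ^ m : ℕ) : ℚ_[p]) := by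
  have hk0 : k ≠ 0 := by have := Nat.one_le_pow m p (Fact.out : p.Prime).pos; omega
  rw [waveletCoeff, if_neg hk0, waveletPred, waveletLevel_eq_succ h₁ h₂, Nat.add_sub_cancel]

theorem sum_range_pow_succ (h : ℚ_[p] → ℚ_[p]) (m : ℕ) :
    ∑ j ∈ Finset.range (p ^ (m + 1)), h j =
      p * ∑ j ∈ Finset.range (p ^ m), h j +
        ∑ k ∈ Finset.Ico (p ^ m) (p ^ (m + 1)), waveletCoeff p h k := by
  have hle : p ^ m ≤ p ^ (m + 1) := Nat.pow_le_pow_right (Fact.out : p.Prime).pos m.le_succ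
  have hmod : ∑ j ∈ Finset.range (p ^ (m + 1)), h ((j % p ^ m : ℕ) : ℚ_[p]) =
      p * ∑ j ∈ Finset.range (p ^ m), h j := by
    rw [pow_succ', sum_range_mul_mod (fun j => h (j : ℚ_[p])), nsmul_eq_mul]
  have hlow : ∑ j ∈ Finset.range (p ^ m), (h j - h ((j % p ^ m : ℕ) : ℚ_[p])) = 0 :=
    Finset.sum_eq_zero fun j hj => by rw [Nat.mod_eq_of_lt (Finset.mem_range.mp hj), sub_self]
  have hhigh : ∑ k ∈ Finset.Ico (p ^ m) (p ^ (m + 1)), waveletCoeff p h k =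
      ∑ k ∈ Finset.Ico (p ^ m) (p ^ (m + 1)), (h k - h ((k % p ^ m : ℕ) : ℚ_[p])) :=
    Finset.sum_congr rfl fun k hk =>
      waveletCoeff_eq_sub_mod h (Finset.mem_Ico.mp hk).1 (Finset.mem_Ico.mp hk).2
  calc ∑ j ∈ Finset.range (p ^ (m + 1)), h j
      = ∑ j ∈ Finset.range (p ^ (m + 1)), h ((j % p ^ m : ℕ) : ℚ_[p]) +
          ∑ j ∈ Finset.range (p ^ (m + 1)), (h j - h ((j % p ^ m : ℕ) : ℚ_[p])) := by
        rw [← Finset.sum_add_distrib]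
        simp only [add_sub_cancel]
    _ = _ := by rw [hmod, ← Finset.sum_range_add_sum_Ico _ hle, hlow, zero_add, hhigh]

theorem sum_range_pow_eq_sum_waveletCoeff (h : ℚ_[p] → ℚ_[p]) (m : ℕ) :
    ∑ j ∈ Finset.range (p ^ m), h j =
      (p : ℚ_[p]) ^ m * ∑ k ∈ Finset.range (p ^ m), waveletCoeff p h k / p ^ waveletLevel p k := by
  have hp : (p : ℚ_[p]) ≠ 0 := Nat.cast_ne_zero.mpr (Fact.out : p.Prime).ne_zero
  induction m with
  | zero => simp [waveletCoeff, waveletLevel]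
  | succ m ih =>
    have hle : p ^ m ≤ p ^ (m + 1) := Nat.pow_le_pow_right (Fact.out : p.Prime).pos m.le_succ
    have hhigh : ∑ k ∈ Finset.Ico (p ^ m) (p ^ (m + 1)), waveletCoeff p h k / p ^ waveletLevel p k
        = ((p : ℚ_[p]) ^ (m + 1))⁻¹ * ∑ k ∈ Finset.Ico (p ^ m) (p ^ (m + 1)), waveletCoeff p h k := by
      rw [Finset.mul_sum]
      refine Finset.sum_congr rfl fun k hk => ?_
      rw [waveletLevel_eq_succ (Finset.mem_Ico.mp hk).1 (Finset.mem_Ico.mp hk).2, div_eq_inv_mul]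
    rw [sum_range_pow_succ, ih, ← Finset.sum_range_add_sum_Ico _ hle, hhigh, mul_add,
      mul_inv_cancel_left₀ (pow_ne_zero _ hp), pow_succ]
    ring

theorem volkenbornSum_eq_sum_waveletCoeff (h : ℚ_[p] → ℚ_[p]) (m : ℕ) :
    volkenbornSum p h m = ∑ k ∈ Finset.range (p ^ m), waveletCoeff p h k / p ^ waveletLevel p k := by
  have hp : (p : ℚ_[p]) ≠ 0 := Nat.cast_ne_zero.mpr (Fact.out : p.Prime).ne_zero
  rw [volkenbornSum, sum_range_pow_eq_sum_waveletCoeff, inv_mul_cancel_left₀ (pow_ne_zero _ hp)]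

theorem volkenbornSum_sub (f g : ℚ_[p] → ℚ_[p]) (m : ℕ) :
    volkenbornSum p (fun x => f x - g x) m = volkenbornSum p f m - volkenbornSum p g m := by
  simp only [volkenbornSum, Finset.sum_sub_distrib, mul_sub]

theorem norm_waveletCoeff_le_of_lt_waveletDelta {h : ℚ_[p] → ℚ_[p]} {n : ℤ}
    (hΔ : ((n : ℝ) : EReal) < waveletDelta p h) (k : ℕ) :
    ‖waveletCoeff p h k‖ ≤ (p : ℝ) ^ (-(n + waveletLevel p k)) := by
  rcases eq_or_ne (waveletCoeff p h k) 0 with h0 | h0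
  · rw [h0, norm_zero]
    positivity
  have hk : ((n : ℝ) : EReal) < valE p (waveletCoeff p h k) - ((waveletLevel p k : ℝ) : EReal) :=
    hΔ.trans_le (iInf_le _ k)
  rw [valE, if_neg h0, ← EReal.coe_sub, EReal.coe_lt_coe_iff, lt_sub_iff_add_lt] at hk
  have hv : n + (waveletLevel p k : ℤ) ≤ (waveletCoeff p h k).valuation := by
    exact_mod_cast hk.le
  rw [Padic.norm_eq_zpow_neg_valuation h0]
  exact zpow_le_zpow_right₀ (by exact_mod_cast (Fact.out : p.Prime).one_le) (neg_le_neg hv)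

theorem norm_volkenbornSum_le_of_lt_waveletDelta {h : ℚ_[p] → ℚ_[p]} {n : ℤ}
    (hΔ : ((n : ℝ) : EReal) < waveletDelta p h) (m : ℕ) :
    ‖volkenbornSum p h m‖ ≤ (p : ℝ) ^ (-n) := by
  have hp : (p : ℝ) ≠ 0 := Nat.cast_ne_zero.mpr (Fact.out : p.Prime).ne_zero
  rw [volkenbornSum_eq_sum_waveletCoeff]
  refine IsUltrametricDist.norm_sum_le_of_forall_le_of_nonneg (by positivity) fun k _ => ?_
  calc ‖waveletCoeff p h k / p ^ waveletLevel p k‖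
      = ‖waveletCoeff p h k‖ * (p : ℝ) ^ (waveletLevel p k : ℤ) := by
        rw [norm_div, Padic.norm_p_pow, zpow_neg, div_inv_eq_mul]
    _ ≤ (p : ℝ) ^ (-(n + waveletLevel p k)) * (p : ℝ) ^ (waveletLevel p k : ℤ) := by
        gcongr
        exact norm_waveletCoeff_le_of_lt_waveletDelta hΔ k
    _ = (p : ℝ) ^ (-n) := by rw [← zpow_add₀ hp]; ring_nf

end Wavelet

theorem volkenborn_congruent_general (p : ℕ) [Fact p.Prime] (f g : ℚ_[p] → ℚ_[p])
    (n : ℤ) (hΔ : ((n : ℝ) : EReal) < waveletDelta p (fun x => f x - g x))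
    (I J : ℚ_[p])
    (hI : Tendsto (volkenbornSum p f) atTop (nhds I))
    (hJ : Tendsto (volkenbornSum p g) atTop (nhds J)) :
    ‖I - J‖ ≤ (p : ℝ) ^ (-n) :=
  le_of_tendsto (hI.sub hJ).norm <| Eventually.of_forall fun m => by
    rw [← volkenbornSum_sub]
    exact norm_volkenbornSum_le_of_lt_waveletDelta hΔ m

/-- If `f, g` are continuously differentiable on `ℤ_p` (hence Volkenborn integrable,
with integrals `I` and `J`) and `Δ(f - g) > n`, then
`∫ f ≡ ∫ g mod p^n ℤ_p`, i.e. `‖I - J‖ ≤ p^{-n}`. -/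
theorem volkenborn_congruent (p : ℕ) [Fact p.Prime] (f g f' g' : ℚ_[p] → ℚ_[p])
    (hfd : ∀ x : ℚ_[p], ‖x‖ ≤ 1 → HasDerivWithinAt f (f' x) {y : ℚ_[p] | ‖y‖ ≤ 1} x)
    (hfc : ContinuousOn f' {y : ℚ_[p] | ‖y‖ ≤ 1})
    (hgd : ∀ x : ℚ_[p], ‖x‖ ≤ 1 → HasDerivWithinAt g (g' x) {y : ℚ_[p] | ‖y‖ ≤ 1} x)
    (hgc : ContinuousOn g' {y : ℚ_[p] | ‖y‖ ≤ 1})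
    (n : ℤ) (hΔ : ((n : ℝ) : EReal) < waveletDelta p (fun x => f x - g x))
    (I J : ℚ_[p])
    (hI : Tendsto (volkenbornSum p f) atTop (nhds I))
    (hJ : Tendsto (volkenbornSum p g) atTop (nhds J)) :
    ‖I - J‖ ≤ (p : ℝ) ^ (-n) :=
  volkenborn_congruent_general p f g n hΔ I J hI hJ
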